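/- arXiv:2404.17502 — 5 statements merged into one kernel-verified Lean document; each statement's English description precedes it below -/
import Mathlib

section
/- If a string P occurs at positions i and j of a string T with 0 < j - i ≤ |P|/2, then j - i is a multiple of per(P). -/
/-!
Two occurrences of `P` at distance `d = j - i` make `d` a period of `P`. Since
`per P ≤ d ≤ |P| / 2`, the weak Fine–Wilf lemma applies to `per P` and `d`: as long as
`p + q ≤ |P|`, subtracting the smaller of two periods from the larger gives a period, so
running Euclid's algorithm shows that `gcd (per P) d` is a period. Minimality of `per P`
forces `per P = gcd (per P) d`, which divides `d`.
-/

/-- `P` occurs at (0-indexed) position `i` of `T`. -/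
def occursAt {α : Type*} (P T : List α) (i : ℕ) : Prop :=
  (T.drop i).take P.length = P

/-- `ρ` is a period of `P`. -/
def isPeriod {α : Type*} (P : List α) (ρ : ℕ) : Prop :=
  0 < ρ ∧ ∀ k, k + ρ < P.length → P[k]? = P[k + ρ]?

/-- The smallest period of `P`. -/
noncomputable def per {α : Type*} (P : List α) : ℕ :=
  sInf {ρ | isPeriod P ρ}

/-- The fragment of `S` on (0-indexed, inclusive) positions `i..j`. -/
def frag {α : Type*} (S : List α) (i j : ℕ) : List α :=
  (S.drop i).take (j - i + 1)

namespace occursAt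

variable {α : Type*} {P T : List α}

lemma getElem?_eq {i : ℕ} (h : occursAt P T i) {k : ℕ} (hk : k < P.length) :
    P[k]? = T[i + k]? := by
  conv_lhs => rw [← h]
  rw [List.getElem?_take_of_lt hk, List.getElem?_drop]

lemma isPeriod_sub {i j : ℕ} (hij : i < j) (hi : occursAt P T i) (hj : occursAt P T j) :
    isPeriod P (j - i) := by
  refine ⟨by omega, fun k hk => ?_⟩
  rw [hi.getElem?_eq hk, hj.getElem?_eq (by omega)]
  congr 1
  omega

end occursAt

namespace isPeriod

variable {α : Type*} {P : List α}

lemma sub {p q : ℕ} (hp : isPeriod P p) (hq : isPeriod P q) (hpq : p < q)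
    (hn : p + q ≤ P.length) : isPeriod P (q - p) := by
  refine ⟨by omega, fun k hk => ?_⟩
  by_cases h : k + q < P.length
  · have e := hp.2 (k + (q - p)) (by omega)
    rw [show k + (q - p) + p = k + q by omega] at e
    rw [e, hq.2 k h]
  · -- `k + q` is past the end, but then `k - p + q` is not, as `p + q ≤ |P|`
    have e₁ := hp.2 (k - p) (by omega)
    have e₂ := hq.2 (k - p) (by omega)
    rw [show k - p + p = k by omega] at e₁
    rw [show k - p + q = k + (q - p) by omega] at e₂
    rw [← e₁, e₂]

theorem gcd {p q : ℕ} (hp : isPeriod P p) (hq : isPeriod P q) (hn : p + q ≤ P.length) :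
    isPeriod P (p.gcd q) := by
  have := hp.1
  have := hq.1
  rcases lt_trichotomy p q with h | rfl | h
  · have h' := hp.gcd (hp.sub hq h hn) (by omega)
    rwa [Nat.gcd_sub_self_right h.le] at h'
  · rwa [Nat.gcd_self]
  · have h' := hq.gcd (hq.sub hp h (by omega)) (by omega)
    rwa [Nat.gcd_sub_self_right h.le, Nat.gcd_comm] at h'
termination_by p + q

lemma per_le {q : ℕ} (hq : isPeriod P q) : per P ≤ q :=
  Nat.sInf_le hq

lemma isPeriod_per {q : ℕ} (hq : isPeriod P q) : isPeriod P (per P) :=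
  Nat.sInf_mem (s := {ρ | isPeriod P ρ}) ⟨q, hq⟩

lemma per_dvd {q : ℕ} (hq : isPeriod P q) (hn : per P + q ≤ P.length) : per P ∣ q := by
  have hper := hq.isPeriod_per
  have hgcd : per P = (per P).gcd q :=
    le_antisymm (hper.gcd hq hn).per_le (Nat.gcd_le_left _ hper.1)
  rw [hgcd]
  exact Nat.gcd_dvd_right _ _

end isPeriod

theorem close_occurrences_period_divides_general {α : Type*} (P T : List α)
    (i j : ℕ) (hij : i < j) (hclose : 2 * (j - i) ≤ P.length)
    (hi : occursAt P T i) (hj : occursAt P T j) :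
    per P ∣ (j - i) := by
  have hd := hi.isPeriod_sub hij hj
  exact hd.per_dvd (by have := hd.per_le; omega)

/-- If `P` occurs at positions `i < j` with `j - i ≤ |P|/2`, then `j - i` is a
multiple of `per P`. -/
theorem close_occurrences_period_divides {α : Type*} (P T : List α)
    (hP : P ≠ []) (i j : ℕ) (hij : i < j) (hclose : 2 * (j - i) ≤ P.length)
    (hi : occursAt P T i) (hj : occursAt P T j) :
    per P ∣ (j - i) :=
  close_occurrences_period_divides_general P T i j hij hclose hi hj
end

section
/- Two distinct τ-runs of a string S can overlap in at most τ/2 positions: if R1 = S[i1..j1] and R2 = S[i2..j2] are distinct τ-runs with i1 ≤ i2, then j1 - i2 + 1 ≤ τ/2. -/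
/-- The fragment `S[i..j]` (0-indexed, inclusive) is a `τ`-run of `S`:
length greater than `3τ`, smallest period at most `τ/4`, and maximal, i.e.,
it cannot be extended in either direction without its smallest period changing. -/
def isTauRun {α : Type*} (S : List α) (τ i j : ℕ) : Prop :=
  i ≤ j ∧ j < S.length ∧ 3 * τ < j - i + 1 ∧ per (frag S i j) ≤ τ / 4 ∧
  (i = 0 ∨ per (frag S (i - 1) j) ≠ per (frag S i j)) ∧
  (j = S.length - 1 ∨ per (frag S i (j + 1)) ≠ per (frag S i j))

/-!
If two τ-runs with smallest periods `p, q ≤ τ/4` shared more than `τ/2` positions, their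
overlap would have length at least `p + q`, hence period `gcd p q` by Fine–Wilf. Moving positions
into the overlap by steps of `p` (resp. `q`) spreads this period to both runs, so minimality gives
`p = q = gcd p q`. The union of the two runs then has period `p`, and maximality forces each run
to be the whole union, contradicting distinctness.
-/

def PeriodicOn {β : Type*} (f : ℕ → β) (p a b : ℕ) : Prop :=
  ∀ x, a ≤ x → x + p ≤ b → f x = f (x + p)

namespace PeriodicOn

variable {β : Type*} {f : ℕ → β} {p q g a b c d : ℕ}

theorem mono (h : PeriodicOn f p a b) (hac : a ≤ c) (hdb : d ≤ b) : PeriodicOn f p c d :=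
  fun x hx hxp => h x (hac.trans hx) (hxp.trans hdb)

theorem _root_.periodicOn_iff_hasPeriod :
    PeriodicOn f p a b ↔ ((List.range' a (b + 1 - a)).map f).HasPeriod p := by
  rw [List.hasPeriod_iff_getElem?]
  simp only [List.length_map, List.length_range', List.getElem?_map]
  constructor
  · intro h i hi
    rw [List.getElem?_range' (by omega), List.getElem?_range' (by omega)]
    simpa [Nat.add_assoc] using h (a + i) (by omega) (by omega)
  · intro h x hax hxb
    have := h (x - a) (by omega)
    rw [List.getElem?_range' (by omega), List.getElem?_range' (by omega)] at this
    simpa [Nat.add_sub_cancel' hax, ← Nat.add_assoc] using this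

theorem gcd (hp : PeriodicOn f p a b) (hq : PeriodicOn f q a b)
    (hlen : a + p + q ≤ b + 1 + p.gcd q) : PeriodicOn f (p.gcd q) a b := by
  rw [periodicOn_iff_hasPeriod] at hp hq ⊢
  refine hp.gcd hq ?_
  simp only [List.length_map, List.length_range']
  omega

/-- Each position is moved into the window by steps of `p`. -/
theorem of_window (hp : PeriodicOn f p a b) (hg : PeriodicOn f g c d) (hp0 : 0 < p)
    (hac : a ≤ c) (hdb : d ≤ b) (hlen : c + p + g ≤ d + 1) : PeriodicOn f g a b := by
  intro x hax hxb
  rcases lt_or_ge x c with hxc | hcx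
  · have h := of_window hp hg hp0 hac hdb hlen (x + p) (by omega) (by omega)
    rw [hp x hax (by omega), h, hp (x + g) (by omega) (by omega), Nat.add_right_comm]
  · rcases le_or_gt (x + g) d with hxd | hdx
    · exact hg x hcx hxd
    · have h := of_window hp hg hp0 hac hdb hlen (x - p) (by omega) (by omega)
      have hx := hp (x - p) (by omega) (by omega)
      have hxg := hp (x - p + g) (by omega) (by omega)
      rw [show x - p + p = x by omega] at hx
      rw [show x - p + g + p = x + g by omega] at hxg
      rwa [← hx, ← hxg]
termination_by x => (c - x) + (x + g - d)

theorem union (h₁ : PeriodicOn f p a b) (h₂ : PeriodicOn f p c d)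
    (hov : c + p ≤ b + 1) : PeriodicOn f p a (max b d) := by
  intro x hax hxd
  rcases le_or_gt (x + p) b with hxb | hbx
  · exact h₁ x hax hxb
  · exact h₂ x (by omega) (by omega)

end PeriodicOn

section Fragments

variable {α : Type*} {S : List α} {i j i' j' ρ : ℕ}

theorem isPeriod_per (P : List α) : isPeriod P (per P) :=
  Nat.sInf_mem (s := {ρ | isPeriod P ρ}) ⟨P.length + 1, Nat.succ_pos _, fun k hk => by omega⟩

theorem per_le_of_isPeriod {P : List α} (h : isPeriod P ρ) : per P ≤ ρ :=
  Nat.sInf_le h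

theorem isPeriod_frag_iff (hj : j < S.length) :
    isPeriod (frag S i j) ρ ↔ 0 < ρ ∧ PeriodicOn (S[·]?) ρ i j := by
  have hlen : (frag S i j).length = min (j - i + 1) (S.length - i) := by
    simp only [frag, List.length_take, List.length_drop]
  have hget : ∀ k, k < j - i + 1 → (frag S i j)[k]? = S[i + k]? := fun k hk => by
    simp only [frag, List.getElem?_take_of_lt hk, List.getElem?_drop]
  refine and_congr_right fun _ => ⟨fun h x hix hxj => ?_, fun h k hk => ?_⟩
  · have := h (x - i) (by omega)
    rwa [hget _ (by omega), hget _ (by omega), Nat.add_sub_cancel' hix,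
      ← Nat.add_assoc, Nat.add_sub_cancel' hix] at this
  · rw [hlen] at hk
    rw [hget _ (by omega), hget _ (by omega), ← Nat.add_assoc]
    exact h (i + k) (by omega) (by omega)

theorem periodicOn_per_frag (hj : j < S.length) :
    0 < per (frag S i j) ∧ PeriodicOn (S[·]?) (per (frag S i j)) i j :=
  (isPeriod_frag_iff hj).1 (isPeriod_per _)

theorem per_frag_le_of_periodicOn (hj : j < S.length) (hρ : 0 < ρ)
    (h : PeriodicOn (S[·]?) ρ i j) : per (frag S i j) ≤ ρ :=
  per_le_of_isPeriod ((isPeriod_frag_iff hj).2 ⟨hρ, h⟩)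

theorem per_frag_eq_of_periodicOn (hi : i' ≤ i) (hj : j ≤ j') (hj' : j' < S.length)
    (h : PeriodicOn (S[·]?) (per (frag S i j)) i' j') :
    per (frag S i' j') = per (frag S i j) := by
  obtain ⟨hρ, -⟩ := periodicOn_per_frag (i := i) (hj.trans_lt hj')
  obtain ⟨hρ', h'⟩ := periodicOn_per_frag (i := i') hj'
  exact le_antisymm (per_frag_le_of_periodicOn hj' hρ h)
    (per_frag_le_of_periodicOn (hj.trans_lt hj') hρ' (h'.mono hi hj))

theorem per_frag_eq_and_periodicOn_union (hj₁ : j < S.length) (hj₂ : j' < S.length)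
    (hii' : i ≤ i') (hov : i' + per (frag S i j) + per (frag S i' j') ≤ min j j' + 1) :
    per (frag S i j) = per (frag S i' j') ∧
      PeriodicOn (S[·]?) (per (frag S i j)) i (max j j') := by
  set p := per (frag S i j)
  set q := per (frag S i' j')
  obtain ⟨hp, hP⟩ := periodicOn_per_frag (i := i) hj₁
  obtain ⟨hq, hQ⟩ := periodicOn_per_frag (i := i') hj₂
  have hgp : p.gcd q ≤ p := Nat.gcd_le_left q hp
  have hgq : p.gcd q ≤ q := Nat.gcd_le_right p hq
  have hg : 0 < p.gcd q := Nat.gcd_pos_of_pos_left q hp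
  have hG : PeriodicOn (S[·]?) (p.gcd q) i' (min j j') :=
    (hP.mono hii' (min_le_left _ _)).gcd (hQ.mono le_rfl (min_le_right _ _)) (by omega)
  have hG₁ := hP.of_window hG hp hii' (min_le_left _ _) (by omega)
  have hG₂ := hQ.of_window hG hq le_rfl (min_le_right _ _) (by omega)
  have hpg : p = p.gcd q := le_antisymm (per_frag_le_of_periodicOn hj₁ hg hG₁) hgp
  have hqg : q = p.gcd q := le_antisymm (per_frag_le_of_periodicOn hj₂ hg hG₂) hgq
  refine ⟨hpg.trans hqg.symm, ?_⟩
  rw [hpg]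
  exact hG₁.union hG₂ (by omega)

end Fragments

theorem isTauRun.eq_of_periodicOn {α : Type*} {S : List α} {τ i j i' j' : ℕ}
    (h : isTauRun S τ i j) (hi : i' ≤ i) (hj : j ≤ j') (hj' : j' < S.length)
    (hper : PeriodicOn (S[·]?) (per (frag S i j)) i' j') : i' = i ∧ j' = j := by
  obtain ⟨-, -, -, -, hleft, hright⟩ := h
  constructor
  · by_contra hi'
    refine hleft.elim (by omega) fun hne => hne ?_
    exact per_frag_eq_of_periodicOn (Nat.sub_le i 1) le_rfl (hj.trans_lt hj')
      (hper.mono (by omega) hj)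
  · by_contra hj''
    refine hright.elim (by omega) fun hne => hne ?_
    exact per_frag_eq_of_periodicOn le_rfl (Nat.le_succ j) (by omega)
      (hper.mono hi (by omega))

theorem tau_runs_overlap_general {α : Type*} (S : List α) (τ i₁ j₁ i₂ j₂ : ℕ)
    (h1 : isTauRun S τ i₁ j₁) (h2 : isTauRun S τ i₂ j₂)
    (hne : (i₁, j₁) ≠ (i₂, j₂)) (hle : i₁ ≤ i₂) :
    j₁ + 1 ≤ i₂ + τ / 2 := by
  by_contra! hov
  have ⟨_, hj₁, _, hper₁, _⟩ := h1
  have ⟨hij₂, hj₂, hlen₂, hper₂, _⟩ := h2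
  obtain ⟨hpq, hU⟩ := per_frag_eq_and_periodicOn_union hj₁ hj₂ hle (by omega)
  obtain ⟨-, hj₁U⟩ := h1.eq_of_periodicOn le_rfl (le_max_left _ _) (max_lt hj₁ hj₂) hU
  obtain ⟨hi, hj₂U⟩ := h2.eq_of_periodicOn hle (le_max_right _ _) (max_lt hj₁ hj₂) (hpq ▸ hU)
  exact hne (by rw [hi, ← hj₁U, hj₂U])

/-- Two distinct `τ`-runs overlap in at most `τ/2` positions: if
`R₁ = S[i₁..j₁]` and `R₂ = S[i₂..j₂]` are distinct `τ`-runs with `i₁ ≤ i₂`,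
then `j₁ - i₂ + 1 ≤ τ/2`. -/
theorem tau_runs_overlap {α : Type*} (S : List α) (τ i₁ j₁ i₂ j₂ : ℕ)
    (hτ : 4 ≤ τ) (h1 : isTauRun S τ i₁ j₁) (h2 : isTauRun S τ i₂ j₂)
    (hne : (i₁, j₁) ≠ (i₂, j₂)) (hle : i₁ ≤ i₂) :
    j₁ + 1 ≤ i₂ + τ / 2 :=
  tau_runs_overlap_general S τ i₁ j₁ i₂ j₂ h1 h2 hne hle
end

section
/- Let S be a binary string of length n, let i ∈ [1..n], and let $ be a letter not appearing in S. Then the length of the longest common substring of 0^n$S and 0^n$S[..i-1]1 equals n + i + 1 if and only if S[i] = 1. -/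
/-- The length of the longest common (contiguous) substring of `A` and `B`. -/
noncomputable def lcsLen {α : Type*} (A B : List α) : ℕ :=
  sSup {k | ∃ W : List α, W.length = k ∧ W <:+: A ∧ W <:+: B}

lemma gp {α : Type*} (l₁ l₂ : List α) (m k : ℕ) (h : l₁.length = m) :
    (l₁ ++ l₂)[m + k]? = l₂[k]? := by
  subst h
  rw [List.getElem?_append_right (Nat.le_add_right _ _)]
  congr 1; omega

lemma gp0 {α : Type*} (l₁ l₂ : List α) (m : ℕ) (h : l₁.length = m) :
    (l₁ ++ l₂)[m]? = l₂[0]? := by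
  subst h
  rw [List.getElem?_append_right le_rfl]
  congr 1; omega

/-- For a binary string `S` of length `n` (letters `0` and `1`, with `2` playing
the role of the separator $), and `i ∈ [1..n]`:
`LCS(0^n $ S, 0^n $ S[..i-1] 1) = n + i + 1` iff `S[i] = 1`. -/
theorem lcs_augmented_index (S : List (Fin 3)) (hS : ∀ c ∈ S, c = 0 ∨ c = 1)
    (n : ℕ) (hn : S.length = n) (i : ℕ) (hi1 : 1 ≤ i) (hi2 : i ≤ n) :
    lcsLen (List.replicate n 0 ++ [2] ++ S)
        (List.replicate n 0 ++ [2] ++ S.take (i - 1) ++ [1]) = n + i + 1 ↔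
      S[i - 1]? = some 1 := by
  set A : List (Fin 3) := List.replicate n 0 ++ [2] ++ S with hA
  set B : List (Fin 3) := List.replicate n 0 ++ [2] ++ S.take (i - 1) ++ [1] with hB
  have htake : (S.take (i-1)).length = i - 1 := by
    rw [List.length_take]; omega
  have hA' : A = List.replicate n (0 : Fin 3) ++ ((2 : Fin 3) :: S) := by
    simp [hA]
  have hB' : B = List.replicate n (0 : Fin 3) ++ ((2 : Fin 3) :: (S.take (i-1) ++ [1])) := by
    simp [hB]
  have hBlen : B.length = n + i + 1 := by
    simp [hB, htake]; omega
  have hgetA : ∀ k, A[n + 1 + k]? = S[k]? := by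
    intro k
    rw [hA', show n + 1 + k = n + (k + 1) by omega, gp _ _ _ _ (by simp)]
    simp
  have hgetAn : A[n]? = some 2 := by
    rw [hA', gp0 _ _ _ (by simp)]
    simp
  have hgetBn : B[n]? = some 2 := by
    rw [hB', gp0 _ _ _ (by simp)]
    simp
  have hgetBni : B[n + i]? = some 1 := by
    rw [hB', show n + i = n + ((i-1) + 1) by omega, gp _ _ _ _ (by simp)]
    simp only [List.getElem?_cons_succ]
    rw [List.getElem?_append_right (by omega), htake]
    simp
  have hbound : ∀ k ∈ {k | ∃ W : List (Fin 3), W.length = k ∧ W <:+: A ∧ W <:+: B},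
      k ≤ n + i + 1 := by
    rintro k ⟨W, hW, -, hWB⟩
    have := hWB.length_le
    omega
  have hne : ({k | ∃ W : List (Fin 3), W.length = k ∧ W <:+: A ∧ W <:+: B}).Nonempty :=
    ⟨0, [], rfl, List.nil_infix, List.nil_infix⟩
  have hbdd : BddAbove {k | ∃ W : List (Fin 3), W.length = k ∧ W <:+: A ∧ W <:+: B} :=
    ⟨n + i + 1, hbound⟩
  constructor
  · intro h
    have hmem := Nat.sSup_mem hne hbdd
    unfold lcsLen at h
    rw [h] at hmem
    obtain ⟨W, hWlen, hWA, hWB⟩ := hmem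
    have hWeq : W = B := hWB.eq_of_length (by rw [hWlen, hBlen])
    subst hWeq
    obtain ⟨s, t, heq⟩ := hWA
    have hs : s = [] := by
      by_contra hsne
      have hslen : 1 ≤ s.length := List.length_pos_iff.mpr hsne
      have h2 : A[s.length + n]? = some 2 := by
        rw [← heq, List.append_assoc, gp _ _ _ _ rfl,
          List.getElem?_append_left (by omega), hgetBn]
      rw [show s.length + n = n + 1 + (s.length - 1) by omega, hgetA] at h2
      have : (2 : Fin 3) ∈ S := List.mem_of_getElem? h2
      rcases hS 2 this with h'|h' <;> exact absurd h' (by decide)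
    subst hs
    simp only [List.nil_append] at heq
    have h1 : A[n + i]? = some 1 := by
      rw [← heq, List.getElem?_append_left (by omega), hgetBni]
    rw [show n + i = n + 1 + (i - 1) by omega, hgetA] at h1
    exact h1
  · intro h
    have htake' : S.take (i-1) ++ [1] = S.take i := by
      rw [show i = (i-1)+1 by omega, List.take_succ, h]
      rfl
    have hpre : B <+: A := by
      refine ⟨S.drop i, ?_⟩
      rw [hB, hA]
      simp only [List.append_assoc]
      congr 1
      congr 1
      rw [← List.append_assoc, htake', List.take_append_drop]
    have hmem : n + i + 1 ∈ {k | ∃ W : List (Fin 3), W.length = k ∧ W <:+: A ∧ W <:+: B} :=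
      ⟨B, hBlen, hpre.isInfix, List.infix_refl _⟩
    exact le_antisymm (csSup_le hne hbound) (le_csSup hbdd hmem)
end

section
/- Let S be a binary string of length m, $ ∉ {0,1}, and i ∈ [1..m]. The string B = S $ S[..i-1] 1 ends with an occurrence of a rotation of A = S $ (i.e., some rotation of A is a suffix of B) if and only if S[i] = 1. -/
/-!
The separator `$` occurs exactly once in every rotation of `S$`, and exactly once in the suffix
`S[i+1..] $ S[..i-1] 1` of `S $ S[..i-1] 1` that has the same length `|S| + 1`. Matching the two
occurrences forces the rotation by `i`, which is `S[i+1..] $ S[..i]`; it equals that suffix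
exactly when `S[i] = 1`.
-/

namespace List

variable {α : Type*}

theorem drop_append_take_append_singleton {S : List α} {c : α} {Δ : ℕ} (hΔ : Δ ≤ S.length) :
    (S ++ [c]).drop Δ ++ (S ++ [c]).take Δ = S.drop Δ ++ c :: S.take Δ := by
  rw [drop_append_of_le_length hΔ, take_append_of_le_length hΔ, append_assoc, singleton_append]

theorem take_add_one_eq_append_singleton_iff {S : List α} {n : ℕ} {a : α} :
    S.take (n + 1) = S.take n ++ [a] ↔ S[n]? = some a := by
  rw [take_add_one, append_cancel_left_eq, Option.toList_eq_singleton_iff]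

theorem exists_rotation_isSuffix_append_take_iff {S : List α} {c a : α} (hc : c ∉ S) {n : ℕ}
    (hn : n < S.length) :
    (∃ Δ < (S ++ [c]).length,
        (S ++ [c]).drop Δ ++ (S ++ [c]).take Δ <:+ S ++ [c] ++ S.take n ++ [a])
      ↔ S[n]? = some a := by
  have hsuffix : (S ++ [c] ++ S.take n ++ [a]).drop (n + 1)
      = S.drop (n + 1) ++ c :: (S.take n ++ [a]) := by
    rw [show S ++ [c] ++ S.take n ++ [a] = S ++ c :: (S.take n ++ [a]) by simp,
      drop_append_of_le_length hn]
  constructor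
  · rintro ⟨Δ, hΔ, hsuf⟩
    have hΔ : Δ ≤ S.length := by simpa [Nat.lt_succ_iff] using hΔ
    have hlen : (S ++ [c] ++ S.take n ++ [a]).length - (S.drop Δ ++ c :: S.take Δ).length
        = n + 1 := by
      simp only [append_assoc, cons_append, nil_append, length_append, length_cons, length_take,
        length_nil, zero_add, length_drop]
      omega
    rw [drop_append_take_append_singleton hΔ, suffix_iff_eq_drop, hlen, hsuffix,
      append_cons_inj_of_notMem (fun h => hc (mem_of_mem_drop h))
        (fun h => hc (mem_of_mem_take h))] at hsuf
    obtain ⟨-, -, htake⟩ := hsuf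
    obtain rfl : Δ = n + 1 := by
      have := congrArg length htake
      simp only [length_take, length_append, length_cons, length_nil, zero_add] at this
      omega
    exact take_add_one_eq_append_singleton_iff.mp htake
  · intro h
    refine ⟨n + 1, by simpa using hn, ?_⟩
    rw [drop_append_take_append_singleton hn, take_add_one_eq_append_singleton_iff.mpr h,
      ← hsuffix]
    exact drop_suffix _ _

end List

/-- For a binary string `S` of length `m` (letters `0` and `1`, with `2` playing
the role of the separator $) and `i ∈ [1..m]`: some rotation of `A = S $` is a
suffix of `B = S $ S[..i-1] 1` iff `S[i] = 1`. -/
theorem cpm_augmented_index (S : List (Fin 3)) (hS : ∀ c ∈ S, c = 0 ∨ c = 1)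
    (m : ℕ) (hm : S.length = m) (i : ℕ) (hi1 : 1 ≤ i) (hi2 : i ≤ m) :
    (∃ Δ < (S ++ [2]).length,
        ((S ++ [2]).drop Δ ++ (S ++ [2]).take Δ) <:+ (S ++ [2] ++ S.take (i - 1) ++ [1]))
      ↔ S[i - 1]? = some 1 := by
  have hsep : (2 : Fin 3) ∉ S := fun h => by
    rcases hS 2 h with h | h <;> exact absurd h (by decide)
  obtain ⟨n, rfl⟩ : ∃ n, i = n + 1 := ⟨i - 1, by omega⟩
  rw [Nat.add_sub_cancel]
  exact List.exists_rotation_isSuffix_append_take_iff hsep (by omega)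
end

section
/- Let P be a string of length m, partitioned into four consecutive fragments P_1, P_2, P_3, P_4, each of length ⌊m/4⌋ or ⌈m/4⌉. Then for every Δ ∈ [0..m-1], setting P' = P[Δ+1..m] ∘ P[1..Δ], some P_i (i ∈ {1,2,3,4}) occurs in P'[1..2⌈m/4⌉]; that is, for every rotation P' of P some P_i occurs at one of the first 2⌈m/4⌉ positions of P'. -/
lemma occ_mid {α : Type*} (A B C : List α) (Δ : ℕ) (hΔ : Δ ≤ A.length) :
    occursAt B ((A ++ B ++ C).drop Δ ++ (A ++ B ++ C).take Δ) (A.length - Δ) := by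
  unfold occursAt
  have hm : A.length ≤ (A ++ B ++ C).length := by
    simp [List.length_append]
  rw [List.drop_append, List.drop_drop, List.length_drop]
  have e1 : Δ + (A.length - Δ) = A.length := by omega
  have e2 : A.length - Δ - ((A ++ B ++ C).length - Δ) = 0 := by omega
  rw [e1, e2, List.drop_zero, List.append_assoc A B C, List.drop_left,
    List.append_assoc, List.take_left]

lemma occ_wrap {α : Type*} (A R : List α) (Δ : ℕ) (h1 : A.length ≤ Δ)
    (h2 : Δ ≤ (A ++ R).length) :
    occursAt A ((A ++ R).drop Δ ++ (A ++ R).take Δ) ((A ++ R).length - Δ) := by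
  unfold occursAt
  rw [List.drop_append, List.length_drop]
  have e1 : (A ++ R).length - Δ - ((A ++ R).length - Δ) = 0 := by omega
  have e2 : (A ++ R).length - Δ ≤ ((A ++ R).drop Δ).length := by
    rw [List.length_drop]
  rw [List.drop_eq_nil_of_le (by rw [List.length_drop]), e1, List.drop_zero,
    List.nil_append, List.take_take, min_eq_left h1, List.take_left]

/-- If `P` of length `m` is partitioned into four consecutive fragments
`P₁P₂P₃P₄`, each of length `⌊m/4⌋` or `⌈m/4⌉`, then in every rotation of `P`,
some `Pᵢ` occurs fully within the first `2⌈m/4⌉` positions. -/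
theorem quarter_occurs_in_rotation_prefix {α : Type*}
    (Pstr P₁ P₂ P₃ P₄ : List α) (m : ℕ)
    (hm : Pstr.length = m) (hm4 : 4 ≤ m)
    (hsplit : Pstr = P₁ ++ P₂ ++ P₃ ++ P₄)
    (h1 : P₁.length = m / 4 ∨ P₁.length = (m + 3) / 4)
    (h2 : P₂.length = m / 4 ∨ P₂.length = (m + 3) / 4)
    (h3 : P₃.length = m / 4 ∨ P₃.length = (m + 3) / 4)
    (h4 : P₄.length = m / 4 ∨ P₄.length = (m + 3) / 4)
    (Δ : ℕ) (hΔ : Δ < m) :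
    ∃ Q ∈ [P₁, P₂, P₃, P₄], ∃ ℓ, ℓ + Q.length ≤ 2 * ((m + 3) / 4) ∧
      occursAt Q (Pstr.drop Δ ++ Pstr.take Δ) ℓ := by
  have hsum : P₁.length + P₂.length + P₃.length + P₄.length = m := by
    rw [← hm, hsplit]; simp [List.length_append]; ring
  have hq : m / 4 ≤ (m + 3) / 4 := Nat.div_le_div_right (by omega)
  have ha : P₁.length ≤ (m + 3) / 4 := by omega
  have hb : P₂.length ≤ (m + 3) / 4 := by omega
  have hc : P₃.length ≤ (m + 3) / 4 := by omega
  have hd : P₄.length ≤ (m + 3) / 4 := by omega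
  by_cases c1 : Δ ≤ P₁.length
  · refine ⟨P₂, by simp, P₁.length - Δ, by omega, ?_⟩
    have := occ_mid P₁ P₂ (P₃ ++ P₄) Δ c1
    rw [hsplit]
    simp only [List.append_assoc] at this ⊢
    exact this
  · by_cases c2 : Δ ≤ P₁.length + P₂.length
    · refine ⟨P₃, by simp, P₁.length + P₂.length - Δ, by omega, ?_⟩
      have := occ_mid (P₁ ++ P₂) P₃ P₄ Δ (by simp only [List.length_append]; omega)
      simp only [List.length_append] at this
      rw [hsplit]
      simp only [List.append_assoc] at this ⊢
      exact this
    · by_cases c3 : Δ ≤ P₁.length + P₂.length + P₃.length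
      · refine ⟨P₄, by simp, P₁.length + P₂.length + P₃.length - Δ, by omega, ?_⟩
        have := occ_mid (P₁ ++ P₂ ++ P₃) P₄ ([] : List α) Δ
          (by simp only [List.length_append]; omega)
        simp only [List.length_append, List.append_nil] at this
        rw [hsplit]
        simp only [List.append_assoc] at this ⊢
        exact this
      · refine ⟨P₁, by simp, m - Δ, by omega, ?_⟩
        have := occ_wrap P₁ (P₂ ++ P₃ ++ P₄) Δ (by omega)
          (by simp only [List.length_append]; omega)
        simp only [List.length_append] at this
        have e : P₁.length + (P₂.length + P₃.length + P₄.length) - Δ = m - Δ := by omega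
        rw [e] at this
        rw [hsplit]
        simp only [List.append_assoc] at this ⊢
        exact this
end
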